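/- arXiv:1712.09476 — 3 statements merged into one kernel-verified Lean document; each statement's English description precedes it below -/
import Mathlib

section
/- Let e ≥ 2 be an integer, (p_n)_{n≥1} a sequence in (0,1], and define f_n(x) = (1/p_{n+1}) x^e - (1-p_{n+1})/p_{n+1} for x ∈ ℂ. Let u_0 ∈ ℂ and u_{n} = f_n(u_{n-1}) for n ≥ 1. Then the sequence (u_n)_{n≥0} is bounded if and only if |u_n| ≤ 1 for all n ≥ 0. -/
/-! Outside the closed unit disk the affine map `y ↦ (y - (1 - p)) / p` does not decrease the
norm, so once `‖u k‖ = R > 1` every later step at least squares the norm: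
`‖u (k + i)‖ ≥ R ^ 2 ^ i → ∞`. -/

lemma norm_le_norm_sub_one_sub_div {p : ℝ} (hp0 : 0 < p) (hp1 : p ≤ 1) {y : ℂ} (hy : 1 ≤ ‖y‖) :
    ‖y‖ ≤ ‖(y - (1 - (p : ℂ))) / p‖ := by
  have hnorm : ‖(1 - (p : ℂ))‖ = 1 - p := by
    rw [← Complex.ofReal_one, ← Complex.ofReal_sub, Complex.norm_real, Real.norm_eq_abs,
      abs_of_nonneg (sub_nonneg.mpr hp1)]
  rw [norm_div, Complex.norm_real, Real.norm_eq_abs, abs_of_pos hp0, le_div_iff₀ hp0]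
  calc ‖y‖ * p ≤ ‖y‖ - (1 - p) := by nlinarith
    _ = ‖y‖ - ‖(1 - (p : ℂ))‖ := by rw [hnorm]
    _ ≤ ‖y - (1 - (p : ℂ))‖ := norm_sub_norm_le _ _

lemma pow_two_pow_le_of_sq_le_succ {a : ℕ → ℝ} (h0 : 1 < a 0)
    (h : ∀ n, 1 < a n → a n ^ 2 ≤ a (n + 1)) (n : ℕ) : a 0 ^ 2 ^ n ≤ a n := by
  induction n with
  | zero => simp
  | succ n ih =>
    have hn : 1 < a n := (one_lt_pow₀ h0 (by positivity)).trans_le ih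
    calc a 0 ^ 2 ^ (n + 1) = (a 0 ^ 2 ^ n) ^ 2 := by rw [pow_succ, pow_mul]
      _ ≤ a n ^ 2 := by gcongr
      _ ≤ a (n + 1) := h n hn

lemma tendsto_atTop_of_sq_le_succ {a : ℕ → ℝ} (h0 : 1 < a 0)
    (h : ∀ n, 1 < a n → a n ^ 2 ≤ a (n + 1)) : Filter.Tendsto a Filter.atTop Filter.atTop :=
  Filter.tendsto_atTop_mono (pow_two_pow_le_of_sq_le_succ h0 h)
    ((tendsto_pow_atTop_atTop_of_one_lt h0).comp
      (tendsto_pow_atTop_atTop_of_one_lt one_lt_two))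

/-- For `e ≥ 2`, `p_n ∈ (0,1]`, `f_n(x) = (x^e - (1-p_{n+1}))/p_{n+1}` and
`u_n = f_n(u_{n-1})`, the sequence `(u_n)` is bounded iff `|u_n| ≤ 1` for all `n`. -/
theorem stmt5 (e : ℕ) (he : 2 ≤ e) (p : ℕ → ℝ) (hp : ∀ n, 1 ≤ n → 0 < p n ∧ p n ≤ 1)
    (u : ℕ → ℂ)
    (hu : ∀ n, 1 ≤ n → u n = (u (n - 1) ^ e - (1 - (p (n + 1) : ℂ))) / (p (n + 1) : ℂ)) :
    (∃ C : ℝ, ∀ n, ‖u n‖ ≤ C) ↔ ∀ n, ‖u n‖ ≤ 1 := by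
  refine ⟨fun ⟨C, hC⟩ k => ?_, fun h => ⟨1, h⟩⟩
  by_contra! hk
  have hgrow : ∀ i, 1 < ‖u (k + i)‖ → ‖u (k + i)‖ ^ 2 ≤ ‖u (k + (i + 1))‖ := by
    intro i hi
    obtain ⟨hp0, hp1⟩ := hp (k + i + 1 + 1) (by omega)
    rw [← add_assoc, hu (k + i + 1) (by omega), Nat.add_sub_cancel]
    calc ‖u (k + i)‖ ^ 2 ≤ ‖u (k + i)‖ ^ e := pow_le_pow_right₀ hi.le he
      _ = ‖u (k + i) ^ e‖ := (norm_pow _ _).symm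
      _ ≤ _ := norm_le_norm_sub_one_sub_div hp0 hp1 (by rw [norm_pow]; exact one_le_pow₀ hi.le)
  obtain ⟨i, hi⟩ := ((tendsto_atTop_of_sq_le_succ hk hgrow).eventually_gt_atTop C).exists
  exact (hC (k + i)).not_gt hi
end

section
/- Let f : ℂ → ℂ be a nonconstant polynomial and R > 0. Then the complement ℂ \ f^{-1}(closed disk of radius R centered at 0) is a connected subset of ℂ. -/
open Metric Set Filter Topology

lemma aux_connected_compl_ball (r : ℝ) (hr : 0 ≤ r) :
    IsConnected {z : ℂ | r < ‖z‖} := by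
  have h1 : (1:Cardinal) < Module.rank ℝ ℂ := by
    rw [Complex.rank_real_complex]; norm_num
  have hsph : IsConnected (sphere (0:ℂ) 1) := isConnected_sphere h1 0 zero_le_one
  have hIoi : IsConnected (Ioi r) := isConnected_Ioi
  have hprod := hIoi.prod hsph
  have himg := hprod.image (fun p : ℝ × ℂ => p.1 • p.2)
    (continuous_fst.smul continuous_snd).continuousOn
  convert himg using 1
  ext z
  simp only [mem_image, mem_prod, mem_Ioi, mem_sphere_iff_norm, sub_zero, mem_setOf_eq]
  constructor
  · intro hz
    have hz0 : z ≠ 0 := by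
      intro h; rw [h, norm_zero] at hz; linarith
    have hn0 : ‖z‖ ≠ 0 := norm_ne_zero_iff.mpr hz0
    refine ⟨(‖z‖, ‖z‖⁻¹ • z), ⟨hz, ?_⟩, ?_⟩
    · rw [norm_smul, norm_inv, norm_norm, inv_mul_cancel₀ hn0]
    · rw [smul_smul, mul_inv_cancel₀ hn0, one_smul]
  · rintro ⟨⟨t, v⟩, ⟨ht, hv⟩, rfl⟩
    simp only [norm_smul, hv, mul_one, Real.norm_eq_abs]
    rwa [abs_of_pos (lt_of_le_of_lt hr ht)]

/-- For a nonconstant polynomial `f : ℂ → ℂ` and `R > 0`, the complement of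
`f⁻¹(closedBall 0 R)` is a connected subset of `ℂ`. -/
theorem stmt8 (f : Polynomial ℂ) (hf : 0 < f.degree) (R : ℝ) (hR : 0 < R) :
    IsConnected ((fun z => f.eval z) ⁻¹' Metric.closedBall (0 : ℂ) R)ᶜ := by
  set S := ((fun z => f.eval z) ⁻¹' Metric.closedBall (0 : ℂ) R)ᶜ with hS
  have hcont : Continuous fun z : ℂ => f.eval z := f.continuous
  have hSo : IsOpen S := ((Metric.isClosed_closedBall).preimage hcont).isOpen_compl
  have hmemS : ∀ z : ℂ, z ∈ S ↔ R < ‖f.eval z‖ := by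
    intro z
    simp [hS, Metric.mem_closedBall, dist_zero_right, not_le]
  -- a neighborhood of infinity inside S
  have htend : Tendsto (fun z : ℂ => ‖f.eval z‖) (cocompact ℂ) atTop :=
    f.tendsto_norm_atTop hf tendsto_norm_cocompact_atTop
  have hmem : {z : ℂ | R < ‖f.eval z‖} ∈ cocompact ℂ :=
    htend.eventually (eventually_gt_atTop R)
  obtain ⟨t, htc, hts⟩ := mem_cocompact.mp hmem
  obtain ⟨r₀, hr₀⟩ := htc.isBounded.subset_closedBall 0
  set r : ℝ := max r₀ 0 with hrdef
  set V : Set ℂ := {z : ℂ | r < ‖z‖} with hV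
  have hVS : V ⊆ S := by
    intro z hz
    rw [hmemS]
    refine hts ?_
    intro hzt
    have := hr₀ hzt
    rw [Metric.mem_closedBall, dist_zero_right] at this
    have : r < r₀ := lt_of_lt_of_le hz this
    exact absurd this (not_lt.mpr (le_max_left _ _))
  have hVconn : IsConnected V := aux_connected_compl_ball r (le_max_right _ _)
  obtain ⟨z₀, hz₀V⟩ := hVconn.nonempty
  -- every connected component of S meets V
  have key : ∀ z ∈ S, (connectedComponentIn S z ∩ V).Nonempty := by
    intro z hz
    by_contra hne
    rw [Set.not_nonempty_iff_eq_empty] at hne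
    set C := connectedComponentIn S z with hC
    have hCS : C ⊆ S := connectedComponentIn_subset S z
    have hCo : IsOpen C := hSo.connectedComponentIn
    have hzC : z ∈ C := mem_connectedComponentIn hz
    -- C is bounded
    have hCb : Bornology.IsBounded C := by
      refine Bornology.IsBounded.subset (Metric.isBounded_closedBall (x := (0:ℂ)) (r := r)) ?_
      intro w hw
      rw [Metric.mem_closedBall, dist_zero_right]
      exact not_lt.mp (fun hlt => Set.eq_empty_iff_forall_notMem.mp hne w ⟨hw, hlt⟩)
    -- frontier of C is outside S
    have hfront : ∀ w ∈ frontier C, ‖f.eval w‖ ≤ R := by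
      intro w hw
      by_contra hgt
      have hwS : w ∈ S := (hmemS w).mpr (not_le.mp hgt)
      have hwC : w ∉ C := by
        have := hw.2
        rwa [hCo.interior_eq] at this
      -- the component of w in S is an open neighborhood of w meeting C
      have hwo : IsOpen (connectedComponentIn S w) := hSo.connectedComponentIn
      have hwm : w ∈ connectedComponentIn S w := mem_connectedComponentIn hwS
      obtain ⟨p, hp1, hp2⟩ := mem_closure_iff.mp hw.1 _ hwo hwm
      have h1 : connectedComponentIn S w = connectedComponentIn S p :=
        connectedComponentIn_eq hp1
      have h2 : connectedComponentIn S z = connectedComponentIn S p :=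
        connectedComponentIn_eq hp2
      exact hwC (by rw [hC, h2, ← h1]; exact hwm)
    -- maximum modulus principle
    have hdc : DiffContOnCl ℂ (fun z : ℂ => f.eval z) C :=
      f.differentiable.diffContOnCl
    have := Complex.norm_le_of_forall_mem_frontier_norm_le hCb hdc hfront
      (subset_closure hzC)
    exact absurd this (not_le.mpr ((hmemS z).mp hz))
  -- conclude: every point of S is in the component of z₀
  have hz₀S : z₀ ∈ S := hVS hz₀V
  have hsub : S ⊆ connectedComponentIn S z₀ := by
    intro z hz
    obtain ⟨p, hpC, hpV⟩ := key z hz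
    have hU : IsPreconnected (connectedComponentIn S z ∪ V) := by
      refine IsPreconnected.union p hpC hpV isPreconnected_connectedComponentIn
        hVconn.isPreconnected
    have hUS : connectedComponentIn S z ∪ V ⊆ S :=
      Set.union_subset (connectedComponentIn_subset S z) hVS
    have := hU.subset_connectedComponentIn (Set.mem_union_right _ hz₀V) hUS
    exact this (Set.mem_union_left _ (mem_connectedComponentIn hz))
  have heq : connectedComponentIn S z₀ = S :=
    Set.Subset.antisymm (connectedComponentIn_subset S z₀) hsub
  exact ⟨⟨z₀, hz₀S⟩, heq ▸ isPreconnected_connectedComponentIn⟩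
end

section
/- Let a,b,c,d be nonnegative integers with ad < bc and bc > (ad-bc)^2, let 0 < p < 1, and define the two-variable recursion u_0 = w_0 = z, u_{n+1} = (u_n^a w_n^b - (1-p))/p, w_{n+1} = (u_n^c w_n^d - (1-p))/p. There exists R = R(p) > 1 such that: for every z ∈ ℂ and every n ≥ 0, if |u_{n+1}(z)| ≤ R then |u_n(z)| ≤ R. Consequently the sets K_n = {z : |u_n(z)| ≤ R} are nested decreasing and {z : (u_n(z))_n bounded} = ⋂_n K_n. -/
/-!
Write `X n = ‖u n z‖` and `Y n = ‖w n z‖`. Up to an error `1 - p`, `p X (n+1) = X n ^ a Y n ^ b`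
and `p Y (n+1) = X n ^ c Y n ^ d`. The heart of the matter is that `X n > R` forces `Y n ≥ 1`.
Otherwise, eliminating one unknown at a time with `e = bc - ad`, one step back `X ≤ 1` and
`Y ≥ 2 / p`, and two steps back `X ^ (e²) ≥ (p/2) ^ (be) (pR/2) ^ (bc)`, which exceeds `R ^ (e²)`
because `e² < bc`. So the bad configuration descends by two steps down to `n ∈ {0, 1}`, where
`u 0 = w 0` excludes it. Once `Y n ≥ 1`, `X (n+1) - 1 ≥ (X n - 1) / p`: above `R` the orbit
increases, and escapes to infinity geometrically.
-/

open Filter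

lemma abs_norm_sub_mul_norm_le {p : ℝ} (hp : 0 < p) (hp1 : p ≤ 1) {x y : ℂ}
    (h : y = (x - (1 - p)) / p) : |‖x‖ - p * ‖y‖| ≤ 1 - p := by
  have hx : x - p * y = ((1 - p : ℝ) : ℂ) := by
    rw [h, mul_div_cancel₀ _ (by exact_mod_cast hp.ne')]
    push_cast
    ring
  have hpy : ‖(p : ℂ) * y‖ = p * ‖y‖ := by
    rw [norm_mul, Complex.norm_real, Real.norm_of_nonneg hp.le]
  simpa only [hx, hpy, Complex.norm_real, Real.norm_of_nonneg (sub_nonneg.mpr hp1)]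
    using abs_norm_sub_norm_le x (p * y)

section ExponentElimination

/- In logarithmic coordinates these are Cramer's rule for the system
`a x + b y ≥ log P`, `c x + d y ≤ 0`, whose determinant is `ad - bc = -e`. -/

variable {a b c d e : ℕ} {X Y P : ℝ}

lemma pow_le_pow_of_le_mul_pow_of_mul_pow_le_one (heq : e + a * d = b * c) (hX : 0 ≤ X)
    (hY : 0 ≤ Y) (hP : 0 ≤ P) (h₁ : P ≤ X ^ a * Y ^ b) (h₂ : X ^ c * Y ^ d ≤ 1) :
    P ^ c ≤ Y ^ e :=
  calc P ^ c ≤ (X ^ a * Y ^ b) ^ c := pow_le_pow_left₀ hP h₁ c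
    _ = (X ^ c * Y ^ d) ^ a * Y ^ e := by
      rw [mul_pow, mul_pow, ← pow_mul, ← pow_mul, ← heq]
      ring
    _ ≤ Y ^ e := mul_le_of_le_one_left (by positivity) (pow_le_one₀ (by positivity) h₂)

lemma pow_mul_pow_le_one_of_le_mul_pow_of_mul_pow_le_one (heq : e + a * d = b * c) (hX : 0 ≤ X)
    (hY : 0 ≤ Y) (hP : 0 ≤ P) (h₁ : P ≤ X ^ a * Y ^ b) (h₂ : X ^ c * Y ^ d ≤ 1) :
    X ^ e * P ^ d ≤ 1 :=
  calc X ^ e * P ^ d ≤ X ^ e * (X ^ a * Y ^ b) ^ d := by gcongr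
    _ = (X ^ c * Y ^ d) ^ b := by
      rw [mul_pow, mul_pow, ← pow_mul, ← pow_mul, ← pow_mul, ← pow_mul, mul_comm c b,
        ← heq]
      ring
    _ ≤ 1 := pow_le_one₀ (by positivity) h₂

end ExponentElimination

/-- `p R / 2 = (2 / p) ^ (b (e + c))`: the exponent is what makes `escapeRadius_pow_lt` hold
once `e² < bc`. -/
noncomputable def escapeRadius (p : ℝ) (b c e : ℕ) : ℝ := (2 / p) ^ (b * (e + c) + 1)

section EscapeRadius

variable {p : ℝ} {b c e : ℕ}

lemma mul_escapeRadius_div_two (hp : p ≠ 0) :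
    p * escapeRadius p b c e / 2 = (2 / p) ^ (b * (e + c)) := by
  rw [escapeRadius, pow_succ]
  field_simp

lemma one_lt_two_div (hp : 0 < p) (hp2 : p < 2) : 1 < 2 / p := by
  rwa [one_lt_div hp]

lemma one_lt_escapeRadius (hp : 0 < p) (hp2 : p < 2) : 1 < escapeRadius p b c e :=
  one_lt_pow₀ (one_lt_two_div hp hp2) (Nat.succ_ne_zero _)

lemma two_le_mul_escapeRadius (hp : 0 < p) (hp2 : p < 2) : 2 ≤ p * escapeRadius p b c e := by
  have := one_le_pow₀ (one_lt_two_div hp hp2).le (n := b * (e + c))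
  rw [← mul_escapeRadius_div_two hp.ne'] at this
  linarith

lemma two_div_pow_le_mul_escapeRadius_div_two_pow (hp : 0 < p) (hp2 : p < 2)
    (hbc : b * c ≠ 0) :
    (2 / p) ^ e ≤ (p * escapeRadius p b c e / 2) ^ c := by
  rw [mul_escapeRadius_div_two hp.ne', ← pow_mul]
  refine pow_le_pow_right₀ (one_lt_two_div hp hp2).le ?_
  have : 1 ≤ b * c := Nat.one_le_iff_ne_zero.mpr hbc
  nlinarith

lemma escapeRadius_pow_lt (hp : 0 < p) (hp2 : p < 2) (he : e * e < b * c) :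
    escapeRadius p b c e ^ (e * e) <
      (p / 2) ^ (b * e) * (p * escapeRadius p b c e / 2) ^ (b * c) := by
  have hq := one_lt_two_div hp hp2
  have hexp : b * e + (b * (e + c) + 1) * (e * e) < b * (e + c) * (b * c) := by
    nlinarith [Nat.mul_le_mul_left (b * (e + c)) he]
  have hp2q : p / 2 = (2 / p)⁻¹ := (inv_div 2 p).symm
  rw [mul_escapeRadius_div_two hp.ne', escapeRadius, hp2q, inv_pow, ← div_eq_inv_mul,
    lt_div_iff₀ (by positivity), ← pow_mul, ← pow_mul, ← pow_add, add_comm]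
  exact pow_lt_pow_right₀ hq hexp

end EscapeRadius

/-- What the escape argument uses about the norms `X n = ‖u n‖`, `Y n = ‖w n‖` of an orbit. -/
structure OrbitNormBounds (a b c d : ℕ) (p : ℝ) (X Y : ℕ → ℝ) : Prop where
  nonneg_fst : ∀ n, 0 ≤ X n
  nonneg_snd : ∀ n, 0 ≤ Y n
  abs_fst_le : ∀ n, |X n ^ a * Y n ^ b - p * X (n + 1)| ≤ 1 - p
  abs_snd_le : ∀ n, |X n ^ c * Y n ^ d - p * Y (n + 1)| ≤ 1 - p

lemma OrbitNormBounds.of_recursion {a b c d : ℕ} {p : ℝ} (hp : 0 < p) (hp1 : p ≤ 1)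
    {u w : ℕ → ℂ} (hu : ∀ n, u (n + 1) = (u n ^ a * w n ^ b - (1 - p)) / p)
    (hw : ∀ n, w (n + 1) = (u n ^ c * w n ^ d - (1 - p)) / p) :
    OrbitNormBounds a b c d p (‖u ·‖) (‖w ·‖) where
  nonneg_fst _ := norm_nonneg _
  nonneg_snd _ := norm_nonneg _
  abs_fst_le n := by simpa only [norm_mul, norm_pow] using abs_norm_sub_mul_norm_le hp hp1 (hu n)
  abs_snd_le n := by simpa only [norm_mul, norm_pow] using abs_norm_sub_mul_norm_le hp hp1 (hw n)

namespace OrbitNormBounds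

variable {a b c d e : ℕ} {p : ℝ} {X Y : ℕ → ℝ}

lemma le_one_and_pow_le_of_escape (h : OrbitNormBounds a b c d p X Y) (heq : e + a * d = b * c)
    (he : e ≠ 0) (hp : 0 < p) {R : ℝ} (hR : 2 ≤ p * R) {n : ℕ} (hX : R < X (n + 1))
    (hY : Y (n + 1) < 1) : X n ≤ 1 ∧ (p * R / 2) ^ c ≤ Y n ^ e := by
  have h₁ : p * R / 2 ≤ X n ^ a * Y n ^ b := by
    have := (abs_le.mp (h.abs_fst_le n)).1
    nlinarith
  have h₂ : X n ^ c * Y n ^ d ≤ 1 := by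
    have := (abs_le.mp (h.abs_snd_le n)).2
    nlinarith
  have hQ : 0 ≤ p * R / 2 := by linarith
  refine ⟨?_, pow_le_pow_of_le_mul_pow_of_mul_pow_le_one heq (h.nonneg_fst n) (h.nonneg_snd n)
    hQ h₁ h₂⟩
  have hXP := pow_mul_pow_le_one_of_le_mul_pow_of_mul_pow_le_one heq (h.nonneg_fst n)
    (h.nonneg_snd n) hQ h₁ h₂
  rw [← pow_le_one_iff_of_nonneg (h.nonneg_fst n) he]
  exact (le_mul_of_one_le_right (by have := h.nonneg_fst n; positivity)
    (one_le_pow₀ (by linarith))).trans hXP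

lemma two_div_le_snd_of_escape (h : OrbitNormBounds a b c d p X Y) (heq : e + a * d = b * c)
    (he : e ≠ 0) (hp : 0 < p) (hp2 : p < 2) {n : ℕ} (hX : escapeRadius p b c e < X (n + 1))
    (hY : Y (n + 1) < 1) : 2 / p ≤ Y n := by
  have hbc : b * c ≠ 0 := by omega
  have hYe := (h.le_one_and_pow_le_of_escape heq he hp (two_le_mul_escapeRadius hp hp2) hX hY).2
  exact (pow_le_pow_iff_left₀ (by positivity) (h.nonneg_snd n) he).mp
    ((two_div_pow_le_mul_escapeRadius_div_two_pow hp hp2 hbc).trans hYe)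

lemma escape_of_escape_add_two (h : OrbitNormBounds a b c d p X Y) (heq : e + a * d = b * c)
    (he : e ≠ 0) (he2 : e * e < b * c) (hp : 0 < p) (hp2 : p < 2) {n : ℕ}
    (hX : escapeRadius p b c e < X (n + 2)) (hY : Y (n + 2) < 1) :
    escapeRadius p b c e < X n ∧ Y n < 1 := by
  have ha : a ≠ 0 := by rintro rfl; nlinarith
  obtain ⟨hX₁, hY₁⟩ :=
    h.le_one_and_pow_le_of_escape heq he hp (two_le_mul_escapeRadius hp hp2) hX hY
  have hpY : 2 ≤ p * Y (n + 1) := by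
    rw [← div_le_iff₀' hp]
    exact h.two_div_le_snd_of_escape heq he hp hp2 hX hY
  have hR := one_lt_escapeRadius (b := b) (c := c) (e := e) hp hp2
  set R := escapeRadius p b c e
  have h₃ : X n ^ a * Y n ^ b ≤ 1 := by
    have := (abs_le.mp (h.abs_fst_le n)).2
    nlinarith
  have h₄ : p * Y (n + 1) / 2 ≤ X n ^ c * Y n ^ d := by
    have := (abs_le.mp (h.abs_snd_le n)).1
    nlinarith
  have h₅ : (p * Y (n + 1) / 2) ^ b ≤ X n ^ e :=
    pow_le_pow_of_le_mul_pow_of_mul_pow_le_one (a := d) (d := a) (by linarith [heq])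
      (h.nonneg_snd n) (h.nonneg_fst n) (by linarith) (by linarith) (by linarith)
  have hXn : R < X n := by
    refine lt_of_pow_lt_pow_left₀ (e * e) (h.nonneg_fst n) ?_
    calc R ^ (e * e)
      _ < (p / 2) ^ (b * e) * (p * R / 2) ^ (b * c) := escapeRadius_pow_lt hp hp2 he2
      _ ≤ (p / 2) ^ (b * e) * (Y (n + 1) ^ e) ^ b := by
        rw [mul_comm b c, pow_mul (p * R / 2) c b]
        gcongr
      _ = ((p * Y (n + 1) / 2) ^ b) ^ e := by ring
      _ ≤ (X n ^ e) ^ e := by gcongr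
      _ = X n ^ (e * e) := (pow_mul _ _ _).symm
  refine ⟨hXn, lt_of_not_ge fun hYn ↦ ?_⟩
  have : 1 < X n ^ a := one_lt_pow₀ (hR.trans hXn) ha
  nlinarith [one_le_pow₀ hYn (n := b)]

lemma one_le_snd_of_escapeRadius_lt (h : OrbitNormBounds a b c d p X Y) (h0 : X 0 = Y 0)
    (heq : e + a * d = b * c) (he : e ≠ 0) (he2 : e * e < b * c) (hp : 0 < p) (hp2 : p < 2)
    (n : ℕ) (hX : escapeRadius p b c e < X n) : 1 ≤ Y n := by
  induction n using Nat.twoStepInduction with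
  | zero => linarith [one_lt_escapeRadius (b := b) (c := c) (e := e) hp hp2]
  | one =>
    by_contra! hY
    have hX₀ := (h.le_one_and_pow_le_of_escape heq he hp (two_le_mul_escapeRadius hp hp2) hX hY).1
    have hY₀ := h.two_div_le_snd_of_escape heq he hp hp2 hX hY
    linarith [one_lt_two_div hp hp2]
  | more n ih _ =>
    by_contra! hY
    obtain ⟨hXn, hYn⟩ := h.escape_of_escape_add_two heq he he2 hp hp2 hX hY
    exact (ih hXn).not_gt hYn

lemma sub_one_le_mul_sub_one (h : OrbitNormBounds a b c d p X Y) (ha : a ≠ 0) {n : ℕ}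
    (hX : 1 ≤ X n) (hY : 1 ≤ Y n) : X n - 1 ≤ p * (X (n + 1) - 1) := by
  have hstep := (abs_le.mp (h.abs_fst_le n)).2
  have : X n ≤ X n ^ a * Y n ^ b :=
    calc X n ≤ X n ^ a := le_self_pow₀ hX ha
      _ ≤ X n ^ a * Y n ^ b := le_mul_of_one_le_right (by positivity) (one_le_pow₀ hY)
  linarith

lemma fst_lt_fst_succ_of_escapeRadius_lt (h : OrbitNormBounds a b c d p X Y) (h0 : X 0 = Y 0)
    (heq : e + a * d = b * c) (he : e ≠ 0) (he2 : e * e < b * c) (hp : 0 < p) (hp1 : p < 1)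
    {n : ℕ} (hX : escapeRadius p b c e < X n) : X n < X (n + 1) := by
  have ha : a ≠ 0 := by rintro rfl; nlinarith
  have hR := one_lt_escapeRadius (b := b) (c := c) (e := e) hp (by linarith)
  have := h.sub_one_le_mul_sub_one ha (by linarith)
    (h.one_le_snd_of_escapeRadius_lt h0 heq he he2 hp (by linarith) n hX)
  nlinarith

lemma fst_le_escapeRadius_of_succ_le (h : OrbitNormBounds a b c d p X Y) (h0 : X 0 = Y 0)
    (heq : e + a * d = b * c) (he : e ≠ 0) (he2 : e * e < b * c) (hp : 0 < p) (hp1 : p < 1)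
    {n : ℕ} (hn : X (n + 1) ≤ escapeRadius p b c e) : X n ≤ escapeRadius p b c e :=
  le_of_not_gt fun hX ↦
    (hX.trans (h.fst_lt_fst_succ_of_escapeRadius_lt h0 heq he he2 hp hp1 hX)).not_ge hn

lemma fst_le_escapeRadius_of_forall_le (h : OrbitNormBounds a b c d p X Y) (h0 : X 0 = Y 0)
    (heq : e + a * d = b * c) (he : e ≠ 0) (he2 : e * e < b * c) (hp : 0 < p) (hp1 : p < 1)
    {C : ℝ} (hC : ∀ n, X n ≤ C) (n : ℕ) : X n ≤ escapeRadius p b c e := by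
  have ha : a ≠ 0 := by rintro rfl; nlinarith
  have hR := one_lt_escapeRadius (b := b) (c := c) (e := e) hp (by linarith)
  by_contra! hn
  have hescape (k : ℕ) : escapeRadius p b c e < X (n + k) := by
    induction k with
    | zero => exact hn
    | succ k ih => exact ih.trans (h.fst_lt_fst_succ_of_escapeRadius_lt h0 heq he he2 hp hp1 ih)
  have hgeom : Tendsto (fun k ↦ X (n + k) - 1) atTop atTop := by
    refine tendsto_atTop_of_geom_le (c := p⁻¹) (by rw [add_zero]; linarith) ((one_lt_inv₀ hp).mpr hp1)
      fun k ↦ ?_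
    rw [inv_mul_le_iff₀ hp]
    exact h.sub_one_le_mul_sub_one ha (hR.trans (hescape k)).le
      (h.one_le_snd_of_escapeRadius_lt h0 heq he he2 hp (by linarith) _ (hescape k))
  obtain ⟨k, hk⟩ := (hgeom.eventually_gt_atTop (C - 1)).exists
  linarith [hC (n + k)]

end OrbitNormBounds

/-- With `ad < bc`, `bc > (ad-bc)^2`, `0 < p < 1` and the two-variable
recursion in the parameter `z` (`u 0 z = w 0 z = z`), there exists `R > 1` such that
`|u (n+1) z| ≤ R → |u n z| ≤ R`; consequently the sets `K n = {z : |u n z| ≤ R}` are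
nested decreasing and the boundedness locus equals `⋂ n, K n`. -/
theorem stmt13 (a b c d : ℕ) (hdet : a * d < b * c)
    (hdet2 : ((a : ℤ) * d - b * c) ^ 2 < (b : ℤ) * c)
    (p : ℝ) (hp : 0 < p) (hp1 : p < 1)
    (u w : ℕ → ℂ → ℂ)
    (hu0 : ∀ z, u 0 z = z) (hw0 : ∀ z, w 0 z = z)
    (hu : ∀ n z, u (n + 1) z = ((u n z) ^ a * (w n z) ^ b - (1 - (p : ℂ))) / (p : ℂ))
    (hw : ∀ n z, w (n + 1) z = ((u n z) ^ c * (w n z) ^ d - (1 - (p : ℂ))) / (p : ℂ)) :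
    ∃ R : ℝ, 1 < R ∧
      (∀ (z : ℂ) (n : ℕ), ‖u (n + 1) z‖ ≤ R → ‖u n z‖ ≤ R) ∧
      (∀ n : ℕ, {z : ℂ | ‖u (n + 1) z‖ ≤ R} ⊆
        {z : ℂ | ‖u n z‖ ≤ R}) ∧
      {z : ℂ | ∃ C : ℝ, ∀ n, ‖u n z‖ ≤ C} =
        ⋂ n, {z : ℂ | ‖u n z‖ ≤ R} := by
  set e := b * c - a * d with he_def
  have heq : e + a * d = b * c := by omega
  have he : e ≠ 0 := by omega
  have he2 : e * e < b * c := by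
    have : ((e * e : ℕ) : ℤ) < b * c := by
      push_cast [he_def, Nat.cast_sub hdet.le]
      linarith
    exact_mod_cast this
  have horbit (z : ℂ) := OrbitNormBounds.of_recursion (u := (u · z)) (w := (w · z)) hp hp1.le
    (hu · z) (hw · z)
  have h0 (z : ℂ) : ‖u 0 z‖ = ‖w 0 z‖ := by rw [hu0, hw0]
  have hback (z : ℂ) (n : ℕ) :
      ‖u (n + 1) z‖ ≤ escapeRadius p b c e → ‖u n z‖ ≤ escapeRadius p b c e :=
    (horbit z).fst_le_escapeRadius_of_succ_le (h0 z) heq he he2 hp hp1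
  refine ⟨escapeRadius p b c e, one_lt_escapeRadius hp (by linarith), hback,
    fun n z ↦ hback z n, ?_⟩
  ext z
  simp only [Set.mem_ofPred_eq, Set.mem_iInter]
  exact ⟨fun ⟨_, hC⟩ ↦
    (horbit z).fst_le_escapeRadius_of_forall_le (h0 z) heq he he2 hp hp1 hC, fun hR ↦ ⟨_, hR⟩⟩
end
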